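/- Let $M$ be a finitely generated $\mathbb{Z}^n$-graded module over $R = k[x_1,\ldots,x_n]$ with a Stanley decomposition $\mathcal{S} = \{(m_1,G_1),\ldots,(m_p,G_p)\}$ such that each $(\deg m_i)^+$ is square-free, $G_i = \{x_l : l \in \mathrm{supp}((\deg m_i)^+)\}$, and $|\deg m_1| \ge \cdots \ge |\deg m_p|$. Set $M^{(j)} = \sum_{i=1}^j R m_i$. Then for each $j = 1,\ldots,p$, the set $\bigcup_{i=1}^{j} \{u m_i : u \text{ a monomial in } k[G_i]\}$ is a $k$-basis of $M^{(j)}$. -/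

import Mathlib

/-!
Common definitions: `ℤⁿ`-graded modules over `R = k[x_1, …, x_n]`, Stanley
decompositions, the Čech complex on `x_1, …, x_n` (computing local cohomology
`H^i_𝔪` and, via the standard characterization, Castelnuovo–Mumford regularity),
and `Ext^i_R(R/I, ω_R)` for a monomial ideal `I`, computed with its natural
`ℤⁿ`-grading from the Taylor complex, which is a graded free resolution of `R/I`
on a chosen set of monomial generators of `I`.
-/

open MvPolynomial

namespace Paper

variable {k : Type} [Field k] {n : ℕ}

/-- The unit vector `e j` in `ℤⁿ`. -/
def eZ (n : ℕ) (j : Fin n) : Fin n → ℤ := fun i => if i = j then 1 else 0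

section Stanley

variable (k n)
variable (M : Type) [AddCommGroup M] [Module (MvPolynomial (Fin n) k) M]
  [Module k M] [IsScalarTower k (MvPolynomial (Fin n) k) M]

/-- The `k`-subspace `k[G]m` of `M` spanned by all `u • m`, `u` a monomial in the
variables of `G`. -/
def stanleySpan (m : M) (G : Set (Fin n)) : Submodule k M :=
  Submodule.span k
    {x | ∃ u : Fin n →₀ ℕ, ↑u.support ⊆ G ∧ x = (monomial u (1 : k) : MvPolynomial (Fin n) k) • m}

/-- `k[G]m` is a Stanley space: no monomial in the variables of `G` kills `m`. -/
def IsStanleySpace (m : M) (G : Set (Fin n)) : Prop :=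
  ∀ u : Fin n →₀ ℕ, ↑u.support ⊆ G → (monomial u (1 : k) : MvPolynomial (Fin n) k) • m ≠ 0

/-- A Stanley decomposition of `M`: finitely many pairs `(m i, G i)` such that each
`k[G i](m i)` is a Stanley space and `M = ⊕ᵢ k[G i](m i)` as `k`-vector spaces. -/
def IsStanleyDecomposition {p : ℕ} (m : Fin p → M) (G : Fin p → Set (Fin n)) : Prop :=
  (∀ i, IsStanleySpace k n M (m i) (G i)) ∧
    DirectSum.IsInternal (fun i : Fin p => stanleySpan k n M (m i) (G i))

end Stanley

section PartialSpan

variable (k n)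

/-- `M⁽ʲ⁾ = R m_1 + ⋯ + R m_j`, the `R`-submodule generated by the first `j`
elements of the family `m`. -/
noncomputable def partialSpan (M : Type) [AddCommGroup M] [Module (MvPolynomial (Fin n) k) M]
    {p : ℕ} (m : Fin p → M) (j : ℕ) : Submodule (MvPolynomial (Fin n) k) M :=
  Submodule.span (MvPolynomial (Fin n) k) (m '' {i : Fin p | (i : ℕ) < j})

end PartialSpan

section Cech

variable (k n)

/-- The multiplicative set generated by the variables `x i`, `i ∈ Λ`. -/
noncomputable def varSubmonoid (Λ : Finset (Fin n)) : Submonoid (MvPolynomial (Fin n) k) :=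
  Submonoid.closure ((fun i => (X i : MvPolynomial (Fin n) k)) '' ↑Λ)

lemma varSubmonoid_mono {Λ Λ' : Finset (Fin n)} (h : Λ ⊆ Λ') :
    varSubmonoid k n Λ ≤ varSubmonoid k n Λ' :=
  Submonoid.closure_mono (fun _ ⟨x, hx, e⟩ => ⟨x, h hx, e⟩)

variable (M : Type) [AddCommGroup M] [Module (MvPolynomial (Fin n) k) M]

/-- The localization `M_{x_Λ}` of `M` inverting the variables in `Λ`. -/
abbrev LocM (Λ : Finset (Fin n)) : Type := LocalizedModule (varSubmonoid k n Λ) M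

/-- The canonical map `M_{x_Λ} → M_{x_Λ'}` for `Λ ⊆ Λ'`. -/
noncomputable def locMap {Λ Λ' : Finset (Fin n)} (h : Λ ⊆ Λ') :
    LocM k n M Λ →ₗ[MvPolynomial (Fin n) k] LocM k n M Λ' :=
  LocalizedModule.lift _ (LocalizedModule.mkLinearMap (varSubmonoid k n Λ') M)
    (fun s => IsLocalizedModule.map_units (LocalizedModule.mkLinearMap (varSubmonoid k n Λ') M)
      ⟨(s : MvPolynomial (Fin n) k), varSubmonoid_mono k n h s.2⟩)

/-- The `j`-th term `Čʲ(M) = ⊕_{|Λ| = j} M_{x_Λ}` of the Čech complex of `M` on the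
variables `x 1, …, x n`. -/
abbrev CechTerm (j : ℕ) : Type :=
  ∀ Λ : {S : Finset (Fin n) // S.card = j}, LocM k n M Λ.1

/-- The Čech differential, an alternating sum of localization maps. -/
noncomputable def cechD (j : ℕ) :
    CechTerm k n M j →ₗ[MvPolynomial (Fin n) k] CechTerm k n M (j + 1) :=
  LinearMap.pi fun Λ' : {S : Finset (Fin n) // S.card = j + 1} =>
    ∑ l ∈ Λ'.1.attach,
      ((-1 : ℤ) ^ ((Λ'.1.filter (fun x => x < l.1)).card)) •
        ((locMap k n M (Finset.erase_subset l.1 Λ'.1)).comp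
          (LinearMap.proj (⟨Λ'.1.erase l.1, by
            rw [Finset.card_erase_of_mem l.2, Λ'.2]; rfl⟩ :
              {S : Finset (Fin n) // S.card = j})))

/-- The coboundaries in cohomological degree `i` of the Čech complex of `M`. -/
noncomputable def cechB : (i : ℕ) → Submodule (MvPolynomial (Fin n) k) (CechTerm k n M i)
  | 0 => ⊥
  | (s + 1) => LinearMap.range (cechD k n M s)

/-- The `j`-th term of the restricted Čech subcomplex `Č_F`: only the direct summands
`M_{x_Λ}` with `F ⊆ Λ` occur (in particular it vanishes for `j < |F|`). -/
def cechSub (F : Finset (Fin n)) (j : ℕ) :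
    Submodule (MvPolynomial (Fin n) k) (CechTerm k n M j) where
  carrier := {c | ∀ Λ, ¬ F ⊆ Λ.1 → c Λ = 0}
  add_mem' := fun h1 h2 Λ h => by
    have := h1 Λ h; have := h2 Λ h
    simp_all
  zero_mem' := fun Λ h => rfl
  smul_mem' := fun r c hc Λ h => by
    have := hc Λ h
    simp_all

/-- The coboundaries of the restricted subcomplex `Č_F` in cohomological degree `i`. -/
noncomputable def cechBF (F : Finset (Fin n)) :
    (i : ℕ) → Submodule (MvPolynomial (Fin n) k) (CechTerm k n M i)
  | 0 => ⊥
  | (s + 1) => Submodule.map (cechD k n M s) (cechSub k n M F s)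

end Cech

section CechGraded

variable (k n)
variable (M : Type) [AddCommGroup M] [Module (MvPolynomial (Fin n) k) M]
variable (gr : (Fin n → ℤ) → Set M)

/-- The multidegree `a` component (for the `ℤⁿ`-grading of `M` given by `gr`) of the
localization `M_{x_Λ}`: generated by fractions `m / xˢ` where `m` is homogeneous of
multidegree `b`, `xˢ` is a monomial in the variables of `Λ` and `b - s = a`. -/
noncomputable def locPiece (Λ : Finset (Fin n)) (a : Fin n → ℤ) :
    AddSubgroup (LocM k n M Λ) :=
  AddSubgroup.closure
    {y | ∃ (m : M) (b : Fin n → ℤ) (s : Fin n →₀ ℕ)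
        (hs : (monomial s (1 : k) : MvPolynomial (Fin n) k) ∈ varSubmonoid k n Λ),
          m ∈ gr b ∧ (∀ i, b i - (s i : ℤ) = a i) ∧
            y = LocalizedModule.mk m ⟨monomial s (1 : k), hs⟩}

/-- The multidegree `a` component of the `j`-th term of the Čech complex of `M`. -/
noncomputable def cechPiece (j : ℕ) (a : Fin n → ℤ) : Set (CechTerm k n M j) :=
  {c | ∀ Λ, c Λ ∈ locPiece k n M gr Λ.1 a}

/-- The total degree `t` component of the `j`-th term of the Čech complex of `M`. -/
noncomputable def cechPieceTot (j : ℕ) (t : ℤ) : AddSubgroup (CechTerm k n M j) :=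
  ⨆ (a : Fin n → ℤ) (_ : (∑ i, a i) = t), AddSubgroup.closure (cechPiece k n M gr j a)

/-- `regLE k n M gr c` says that the Castelnuovo–Mumford regularity of the graded
module `M` (with respect to the total degree `ℤ`-grading) is at most `c`; by the
standard local cohomology characterization of regularity,
`reg M = max {i + t : Hⁱ_𝔪(M)_t ≠ 0}`, where `Hⁱ_𝔪(M)` is the cohomology of the
Čech complex of `M` on `x 1, …, x n`. -/
noncomputable def regLE (c : ℤ) : Prop :=
  ∀ (i : ℕ) (t : ℤ) (z : CechTerm k n M i),
    z ∈ LinearMap.ker (cechD k n M i) → z ∈ cechPieceTot k n M gr i t →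
      z ∉ cechB k n M i → (i : ℤ) + t ≤ c

end CechGraded

section Pieces

variable (k n)

/-- The set of homogeneous polynomials of multidegree `a ∈ ℤⁿ`
(empty if some `a i < 0`). -/
def RPieceSet (a : Fin n → ℤ) : Set (MvPolynomial (Fin n) k) :=
  {g | ∃ (c : k) (s : Fin n →₀ ℕ), (∀ i, (s i : ℤ) = a i) ∧ g = monomial s c}

/-- The multidegree `a` component of the polynomial ring, as a `k`-subspace. -/
noncomputable def RPiece (a : Fin n → ℤ) : Submodule k (MvPolynomial (Fin n) k) :=
  Submodule.span k (RPieceSet k n a)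

/-- A monomial ideal: an ideal generated by monomials. -/
def IsMonomialIdeal (I : Ideal (MvPolynomial (Fin n) k)) : Prop :=
  ∃ T : Set (Fin n →₀ ℕ), I = Ideal.span ((fun s => (monomial s (1 : k))) '' T)

/-- The multidegree `a` component of `R/I`: the image of the multidegree `a`
component of `R`. -/
def quotientGrSet (I : Ideal (MvPolynomial (Fin n) k)) (a : Fin n → ℤ) :
    Set (MvPolynomial (Fin n) k ⧸ I) :=
  (fun g => Submodule.Quotient.mk g) '' RPieceSet k n a

end Pieces

section Taylor

variable (k n)
variable {r : ℕ} (u : Fin r → (Fin n →₀ ℕ))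

/-- The exponent of the least common multiple of the monomials `x^(u l)`, `l ∈ S`. -/
noncomputable def lcmExp (S : Finset (Fin r)) : Fin n →₀ ℕ :=
  Finsupp.equivFunOnFinite.symm (fun i => S.sup (fun l => u l i))

/-- The `s`-th term of `Hom_R(T_•, ω_R)`, where `T_•` is the Taylor complex (a
`ℤⁿ`-graded free resolution of `R/I`) on the monomial generators `x^(u l)` of `I`:
as a module it is a direct sum of copies of `R` indexed by `s`-subsets of generators. -/
abbrev TaylorDual (s : ℕ) : Type :=
  ∀ _S : {S : Finset (Fin r) // S.card = s}, MvPolynomial (Fin n) k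

/-- The differential of `Hom_R(T_•, ω_R)`: the transpose of the Taylor complex
differential. -/
noncomputable def taylorD (s : ℕ) :
    TaylorDual k n (r := r) s →ₗ[MvPolynomial (Fin n) k] TaylorDual k n (r := r) (s + 1) :=
  LinearMap.pi fun S' : {S : Finset (Fin r) // S.card = s + 1} =>
    ∑ l ∈ S'.1.attach,
      (monomial (lcmExp n u S'.1 - lcmExp n u (S'.1.erase l.1))
          ((-1 : k) ^ ((S'.1.filter (fun x => x < l.1)).card))) •
        (LinearMap.proj (⟨S'.1.erase l.1, by
            rw [Finset.card_erase_of_mem l.2, S'.2]; rfl⟩ :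
              {S : Finset (Fin r) // S.card = s}))

/-- Cocycles of `Hom_R(T_•, ω_R)` in cohomological degree `i`. -/
noncomputable def extZ (i : ℕ) :
    Submodule (MvPolynomial (Fin n) k) (TaylorDual k n (r := r) i) :=
  LinearMap.ker (taylorD k n u i)

/-- Coboundaries of `Hom_R(T_•, ω_R)` in cohomological degree `i`. -/
noncomputable def extB :
    (i : ℕ) → Submodule (MvPolynomial (Fin n) k) (TaylorDual k n (r := r) i)
  | 0 => ⊥
  | (s + 1) => LinearMap.range (taylorD k n u s)

/-- `Ext^i_R(R/I, ω_R)`: the `i`-th cohomology of `Hom_R(T_•, ω_R)`, where `T_•` is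
the Taylor resolution of `R/I` on the monomial generators `x^(u l)` of `I` and
`ω_R = R(-(1,…,1))` is the canonical module. -/
noncomputable def ExtMod (i : ℕ) : Type :=
  extZ k n u i ⧸ (Submodule.comap (extZ k n u i).subtype (extB k n u i ⊓ extZ k n u i))

noncomputable instance (i : ℕ) : AddCommGroup (ExtMod k n u i) :=
  inferInstanceAs (AddCommGroup (extZ k n u i ⧸ _))

noncomputable instance (i : ℕ) : Module (MvPolynomial (Fin n) k) (ExtMod k n u i) :=
  inferInstanceAs (Module (MvPolynomial (Fin n) k) (extZ k n u i ⧸ _))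

noncomputable instance (i : ℕ) : Module k (ExtMod k n u i) :=
  inferInstanceAs (Module k (extZ k n u i ⧸ _))

noncomputable instance (i : ℕ) :
    IsScalarTower k (MvPolynomial (Fin n) k) (ExtMod k n u i) :=
  inferInstanceAs (IsScalarTower k (MvPolynomial (Fin n) k) (extZ k n u i ⧸ _))

/-- The multidegree `a` component of `Hom_R(T_s, ω_R) = ⊕_S Hom_R(R(-lcm_S), R(-(1,…,1)))`:
the component indexed by an `s`-subset `S` must be homogeneous of multidegree
`a + lcm_S - (1,…,1)` in `R`. -/
noncomputable def taylorPiece (s : ℕ) (a : Fin n → ℤ) :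
    Submodule k (TaylorDual k n (r := r) s) :=
  Submodule.pi Set.univ
    (fun S : {S : Finset (Fin r) // S.card = s} =>
      RPiece k n (fun i => a i + (lcmExp n u S.1 i : ℤ) - 1))

/-- The multidegree `a` component of `Ext^i_R(R/I, ω_R)`, i.e. of the `i`-th
cohomology of `Hom_R(T_•, ω_R)`: the image of the multidegree `a` cocycles. -/
noncomputable def extPiece (i : ℕ) (a : Fin n → ℤ) : Submodule k (ExtMod k n u i) :=
  Submodule.map
    ((Submodule.mkQ (Submodule.comap (extZ k n u i).subtype
        (extB k n u i ⊓ extZ k n u i))).restrictScalars k)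
    (Submodule.comap ((extZ k n u i).subtype.restrictScalars k) (taylorPiece k n u i a))

end Taylor

end Paper

/-!
The generators `u • m i` of all Stanley spaces together are `k`-linearly independent: the Stanley
spaces form a direct sum, and inside one of them the `u • m i` are nonzero of pairwise distinct
multidegrees `d i + u`.

For the span it suffices that `span_k {u • m i : i < j}` is stable under the variables, i.e. that
`w • m i` lies in it for every monomial `w` and `i < j`. Writing `w • m i` in the basis of all
generators, only generators `u • m i'` of the same multidegree `d i' + u = d i + w` occur. If
`i' ≥ j > i`, then `d i ≤ d i'` componentwise (where `u` is nonzero, `d i' = 1 ≥ d i` by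
square-freeness), while `|d i'| ≤ |d i|` by the ordering; hence `d i' = d i`, `u = w` and
`G i' = G i`, so `w • m i` was a generator already.
-/

section Homogeneous

variable {R M ι : Type*} [Semiring R] [AddCommMonoid M] [Module R M] {N : ι → Submodule R M}

theorem iSupIndep.eq_of_mem_of_mem (hN : iSupIndep N) {a b : ι} {x : M} (ha : x ∈ N a)
    (hb : x ∈ N b) (hx : x ≠ 0) : a = b := by
  by_contra hab
  exact hx ((Submodule.disjoint_def.mp (hN.pairwiseDisjoint hab)) x ha hb)

theorem DirectSum.IsInternal.mem_span_inter_of_mem_span [DecidableEq ι]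
    (hN : DirectSum.IsInternal N) {T : Set M} (hT : ∀ t ∈ T, ∃ b, t ∈ N b) {a : ι} {x : M}
    (hxa : x ∈ N a) (hx : x ∈ Submodule.span R T) :
    x ∈ Submodule.span R {t ∈ T | t ∈ N a} := by
  let := hN.chooseDecomposition
  let π : M →ₗ[R] M := (N a).subtype ∘ₗ DirectSum.component R ι (fun i => N i) a ∘ₗ
    DirectSum.decomposeLinearEquiv N
  have hπ : ∀ y, π y = DirectSum.decompose N y a := fun _ => rfl
  have hπT : π '' T ⊆ Submodule.span R {t ∈ T | t ∈ N a} := by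
    rintro _ ⟨t, ht, rfl⟩
    obtain ⟨b, htb⟩ := hT t ht
    rw [hπ]
    by_cases hba : b = a
    · subst hba
      rw [DirectSum.decompose_of_mem_same N htb]
      exact Submodule.subset_span ⟨ht, htb⟩
    · rw [DirectSum.decompose_of_mem_ne N htb hba]
      exact Submodule.zero_mem _
  have hπx := Submodule.mem_map_of_mem (f := π) hx
  rw [Submodule.map_span, hπ, DirectSum.decompose_of_mem_same N hxa] at hπx
  exact Submodule.span_le.mpr hπT hπx

end Homogeneous

theorem eq_and_eq_of_add_eq_add_of_sum_le {ι : Type*} [Fintype ι] {d d' : ι → ℤ}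
    {u w : ι →₀ ℕ} (hd : ∀ l, d l ≤ 1) (hu : ↑u.support ⊆ {l | 0 < d' l})
    (hsum : ∑ l, d' l ≤ ∑ l, d l) (h : ∀ l, d' l + u l = d l + w l) : d' = d ∧ u = w := by
  have hle : ∀ l, d l ≤ d' l := by
    intro l
    by_cases hul : u l = 0
    · have := h l
      rw [hul] at this
      omega
    · have hpos : 0 < d' l := hu (Finsupp.mem_support_iff.mpr hul)
      have := hd l
      omega
  have hdd : d' = d := by
    have hsum_eq : ∑ l, d l = ∑ l, d' l := le_antisymm (Finset.sum_le_sum fun l _ => hle l) hsum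
    funext l
    exact ((Finset.sum_eq_sum_iff_of_le fun l _ => hle l).mp hsum_eq l (Finset.mem_univ l)).symm
  refine ⟨hdd, Finsupp.ext fun l => ?_⟩
  have := h l
  rw [hdd] at this
  omega

namespace MvPolynomial

variable {k : Type*} [CommSemiring k] {σ : Type*} {M : Type*} [AddCommMonoid M]
  [Module (MvPolynomial σ k) M] [Module k M] [IsScalarTower k (MvPolynomial σ k) M]

theorem smul_mem_span_of_forall_X_smul_mem {T : Set M}
    (hT : ∀ l, ∀ t ∈ T, (X l : MvPolynomial σ k) • t ∈ Submodule.span k T)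
    (r : MvPolynomial σ k) {x : M} (hx : x ∈ Submodule.span k T) :
    r • x ∈ Submodule.span k T := by
  have hX : ∀ l, ∀ y ∈ Submodule.span k T,
      (X l : MvPolynomial σ k) • y ∈ Submodule.span k T := by
    intro l y hy
    induction hy using Submodule.span_induction with
    | mem t ht => exact hT l t ht
    | zero => simp
    | add y z _ _ hy hz => simpa only [smul_add] using Submodule.add_mem _ hy hz
    | smul c y _ hy => simpa only [smul_comm _ c] using Submodule.smul_mem _ c hy
  induction r using MvPolynomial.induction_on generalizing x with
  | C c => simpa only [← algebraMap_eq, algebraMap_smul] using Submodule.smul_mem _ c hx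
  | add p q hp hq => simpa only [add_smul] using Submodule.add_mem _ (hp hx) (hq hx)
  | mul_X p l hp => simpa only [mul_smul] using hp (hX l x hx)

end MvPolynomial

namespace Paper

section Graded

variable {k M : Type*} [CommSemiring k] [AddCommMonoid M] {n : ℕ}
  [Module (MvPolynomial (Fin n) k) M] [Module k M] {gr : (Fin n → ℤ) → Submodule k M}

def IsMultigraded (gr : (Fin n → ℤ) → Submodule k M) : Prop :=
  ∀ (j : Fin n) (a : Fin n → ℤ), ∀ x ∈ gr a,
    (X j : MvPolynomial (Fin n) k) • x ∈ gr (a + eZ n j)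

theorem X_pow_smul_mem
    (hgr : IsMultigraded gr)
    (l : Fin n) (c : ℕ) {b : Fin n → ℤ} {x : M} (hx : x ∈ gr b) :
    (X l ^ c : MvPolynomial (Fin n) k) • x ∈ gr (fun i => b i + Finsupp.single l c i) := by
  induction c with
  | zero => simpa using hx
  | succ c ih =>
    have hdeg : (fun i => b i + Finsupp.single l (c + 1) i : Fin n → ℤ) =
        (fun i => b i + Finsupp.single l c i) + eZ n l := by
      funext i
      simp only [Pi.add_apply, eZ, Finsupp.single_apply]
      split_ifs <;> grind
    rw [pow_succ', mul_smul, hdeg]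
    exact hgr l _ _ ih

theorem monomial_smul_mem
    (hgr : IsMultigraded gr)
    (u : Fin n →₀ ℕ) {b : Fin n → ℤ} {x : M} (hx : x ∈ gr b) :
    (monomial u (1 : k) : MvPolynomial (Fin n) k) • x ∈ gr (fun i => b i + u i) := by
  induction u using Finsupp.induction generalizing b x with
  | zero => simpa using hx
  | single_add l c u _ _ ih =>
    have hdeg : (fun i => b i + (Finsupp.single l c + u) i : Fin n → ℤ) =
        fun i => (b i + u i) + Finsupp.single l c i := by
      funext i
      simp only [Finsupp.add_apply]
      push_cast
      ring
    rw [monomial_single_add, mul_smul, hdeg]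
    exact X_pow_smul_mem hgr l c (ih hx)

end Graded

section Stanley

variable (k : Type) [Field k] {n : ℕ} {M : Type} [AddCommGroup M]
  [Module (MvPolynomial (Fin n) k) M] [Module k M]

def monomialMultiples (m : M) (G : Set (Fin n)) : Set M :=
  {x | ∃ u : Fin n →₀ ℕ, ↑u.support ⊆ G ∧
    x = (monomial u (1 : k) : MvPolynomial (Fin n) k) • m}

def stanleyGens {p : ℕ} (m : Fin p → M) (G : Fin p → Set (Fin n)) (j : ℕ) : Set M :=
  {x | ∃ i : Fin p, (i : ℕ) < j ∧ x ∈ monomialMultiples k (m i) (G i)}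

variable {k} {gr : (Fin n → ℤ) → Submodule k M}

theorem linearIndepOn_monomialMultiples (hgr_internal : DirectSum.IsInternal gr)
    (hgr : IsMultigraded gr)
    {m : M} {G : Set (Fin n)} {d : Fin n → ℤ} (hm : m ∈ gr d)
    (hS : IsStanleySpace k n M m G) :
    LinearIndepOn k id (monomialMultiples k m G) := by
  let v : {u : Fin n →₀ ℕ // ↑u.support ⊆ G} → M := fun u => monomial u.1 (1 : k) • m
  let deg : {u : Fin n →₀ ℕ // ↑u.support ⊆ G} → Fin n → ℤ := fun u i => d i + u.1 i
  have hdeg : Function.Injective deg := fun u w h =>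
    Subtype.ext (Finsupp.ext fun i => by simpa [deg] using congrFun h i)
  have hv : LinearIndependent k v :=
    (hgr_internal.submodule_iSupIndep.comp hdeg).linearIndependent _
      (fun u => monomial_smul_mem hgr u.1 hm) (fun u => hS u.1 u.2)
  have hrange : Set.range v = monomialMultiples k m G := by
    ext x
    simp [v, monomialMultiples, eq_comm]
  rw [← hrange]
  exact (linearIndepOn_id_range_iff hv.injective).mpr hv

theorem IsStanleyDecomposition.linearIndepOn_iUnion (hgr_internal : DirectSum.IsInternal gr)
    (hgr : IsMultigraded gr)
    {p : ℕ} {m : Fin p → M} {G : Fin p → Set (Fin n)} {d : Fin p → (Fin n → ℤ)}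
    (hSD : IsStanleyDecomposition k n M m G) (hdeg : ∀ i, m i ∈ gr (d i)) :
    LinearIndepOn k id (⋃ i, monomialMultiples k (m i) (G i)) := by
  refine linearIndepOn_id_iUnion_finite
    (fun i => linearIndepOn_monomialMultiples hgr_internal hgr (hdeg i) (hSD.1 i))
    fun i t _ hit => (hSD.2.submodule_iSupIndep i).mono_right ?_
  exact iSup₂_le fun i' hi' => le_iSup₂_of_le i' (ne_of_mem_of_not_mem hi' hit) le_rfl

theorem IsStanleyDecomposition.span_iUnion_eq_top {p : ℕ} {m : Fin p → M}
    {G : Fin p → Set (Fin n)} (hSD : IsStanleyDecomposition k n M m G) :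
    Submodule.span k (⋃ i, monomialMultiples k (m i) (G i)) = ⊤ := by
  rw [Submodule.span_iUnion]
  exact hSD.2.submodule_iSup_eq_top

theorem monomial_smul_mem_span_stanleyGens (hgr_internal : DirectSum.IsInternal gr)
    (hgr : IsMultigraded gr)
    {p : ℕ} {m : Fin p → M} {G : Fin p → Set (Fin n)} {d : Fin p → (Fin n → ℤ)}
    (hSD : IsStanleyDecomposition k n M m G) (hdeg : ∀ i, m i ∈ gr (d i))
    (hsf : ∀ i l, d i l ≤ 1) (hG : ∀ i, G i = {l | 0 < d i l})
    (hord : ∀ i j : Fin p, i ≤ j → (∑ l, d j l) ≤ (∑ l, d i l))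
    ⦃j : ℕ⦄ ⦃i : Fin p⦄ (hij : (i : ℕ) < j) (w : Fin n →₀ ℕ) :
    (monomial w (1 : k) : MvPolynomial (Fin n) k) • m i ∈
      Submodule.span k (stanleyGens k m G j) := by
  by_cases hw : ↑w.support ⊆ G i
  · exact Submodule.subset_span ⟨i, hij, w, hw, rfl⟩
  have hT : ∀ t ∈ ⋃ i, monomialMultiples k (m i) (G i), ∃ b, t ∈ gr b := by
    rintro t ⟨_, ⟨i', rfl⟩, u, -, rfl⟩
    exact ⟨_, monomial_smul_mem hgr u (hdeg i')⟩
  refine Submodule.span_mono ?_ (hgr_internal.mem_span_inter_of_mem_span hT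
    (monomial_smul_mem hgr w (hdeg i)) (hSD.span_iUnion_eq_top ▸ Submodule.mem_top))
  rintro _ ⟨⟨_, ⟨i', rfl⟩, u, hu, rfl⟩, hmem⟩
  refine ⟨i', ?_, u, hu, rfl⟩
  by_contra! hji'
  have hdeg_eq := hgr_internal.submodule_iSupIndep.eq_of_mem_of_mem
    (monomial_smul_mem hgr u (hdeg i')) hmem (hSD.1 i' u hu)
  obtain ⟨hdd, rfl⟩ := eq_and_eq_of_add_eq_add_of_sum_le (hsf i) (hG i' ▸ hu)
    (hord i i' (by omega)) (congrFun hdeg_eq)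
  exact hw (by rwa [hG i, ← hdd, ← hG i'])

end Stanley

end Paper

open MvPolynomial Paper in
theorem stmt_9_general {k : Type} [Field k] {n : ℕ}
    (M : Type) [AddCommGroup M] [Module (MvPolynomial (Fin n) k) M]
    [Module k M] [IsScalarTower k (MvPolynomial (Fin n) k) M]
    -- `gr` is the `ℤⁿ`-grading of `M`
    (gr : (Fin n → ℤ) → Submodule k M)
    (hgr_internal : DirectSum.IsInternal gr)
    (hgr_compat : ∀ (j : Fin n) (a : Fin n → ℤ), ∀ x ∈ gr a,
      (X j : MvPolynomial (Fin n) k) • x ∈ gr (a + eZ n j))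
    -- a Stanley decomposition `{(m i, G i)}` of `M` …
    {p : ℕ} (m : Fin p → M) (G : Fin p → Set (Fin n)) (d : Fin p → (Fin n → ℤ))
    (hSD : IsStanleyDecomposition k n M m G)
    -- … by homogeneous elements `m i` of degree `d i`,
    (hdeg : ∀ i, m i ∈ gr (d i))
    -- with `(d i)⁺` square-free,
    (hsf : ∀ i l, d i l ≤ 1)
    -- `G i = supp ((d i)⁺)`,
    (hG : ∀ i, G i = {l | 0 < d i l})
    -- and the pairs ordered by weakly decreasing total degree:
    (hord : ∀ i j : Fin p, i ≤ j → (∑ l, d j l) ≤ (∑ l, d i l)) :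
    -- Then, with `M⁽ʲ⁾ = R m_1 + ⋯ + R m_j`, the set
    -- `⋃_{i ≤ j} {u • m_i : u a monomial in k[G i]}` is a `k`-basis of `M⁽ʲ⁾`:
    ∀ j : ℕ, j ≤ p →
      (LinearIndependent k
          ((↑) : {x : M | ∃ i : Fin p, (i : ℕ) < j ∧
            ∃ u : Fin n →₀ ℕ, ↑u.support ⊆ G i ∧
              x = (monomial u (1 : k) : MvPolynomial (Fin n) k) • m i} → M) ∧
        Submodule.span k {x : M | ∃ i : Fin p, (i : ℕ) < j ∧
            ∃ u : Fin n →₀ ℕ, ↑u.support ⊆ G i ∧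
              x = (monomial u (1 : k) : MvPolynomial (Fin n) k) • m i} =
          Submodule.restrictScalars k (partialSpan k n M m j)) := by
  intro j _
  change LinearIndepOn k id (stanleyGens k m G j) ∧
    Submodule.span k (stanleyGens k m G j) = (partialSpan k n M m j).restrictScalars k
  have hgen := monomial_smul_mem_span_stanleyGens hgr_internal hgr_compat hSD hdeg hsf hG hord
  refine ⟨(hSD.linearIndepOn_iUnion hgr_internal hgr_compat hdeg).mono ?_, le_antisymm ?_ ?_⟩
  · exact fun x ⟨i, _, hx⟩ => Set.mem_iUnion.mpr ⟨i, hx⟩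
  · rw [Submodule.span_le]
    rintro _ ⟨i, hij, u, -, rfl⟩
    exact (partialSpan k n M m j).smul_mem _ (Submodule.subset_span ⟨i, hij, rfl⟩)
  · intro x hx
    induction hx using Submodule.span_induction with
    | mem _ hmi =>
      obtain ⟨i, hij, rfl⟩ := hmi
      simpa using hgen hij 0
    | zero => exact Submodule.zero_mem _
    | add _ _ _ _ hx hy => exact Submodule.add_mem _ hx hy
    | smul r _ _ hx =>
      refine smul_mem_span_of_forall_X_smul_mem ?_ r hx
      rintro l _ ⟨i, hij, u, -, rfl⟩
      rw [smul_smul, X, monomial_mul, one_mul]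
      exact hgen hij _

open MvPolynomial Paper in
theorem stmt_9 {k : Type} [Field k] {n : ℕ}
    (M : Type) [AddCommGroup M] [Module (MvPolynomial (Fin n) k) M]
    [Module k M] [IsScalarTower k (MvPolynomial (Fin n) k) M]
    [Module.Finite (MvPolynomial (Fin n) k) M]
    -- `gr` is the `ℤⁿ`-grading of `M`
    (gr : (Fin n → ℤ) → Submodule k M)
    (hgr_internal : DirectSum.IsInternal gr)
    (hgr_compat : ∀ (j : Fin n) (a : Fin n → ℤ), ∀ x ∈ gr a,
      (X j : MvPolynomial (Fin n) k) • x ∈ gr (a + eZ n j))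
    -- a Stanley decomposition `{(m i, G i)}` of `M` …
    {p : ℕ} (m : Fin p → M) (G : Fin p → Set (Fin n)) (d : Fin p → (Fin n → ℤ))
    (hSD : IsStanleyDecomposition k n M m G)
    -- … by homogeneous elements `m i` of degree `d i`,
    (hdeg : ∀ i, m i ∈ gr (d i))
    -- with `(d i)⁺` square-free,
    (hsf : ∀ i l, d i l ≤ 1)
    -- `G i = supp ((d i)⁺)`,
    (hG : ∀ i, G i = {l | 0 < d i l})
    -- and the pairs ordered by weakly decreasing total degree:
    (hord : ∀ i j : Fin p, i ≤ j → (∑ l, d j l) ≤ (∑ l, d i l)) :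
    -- Then, with `M⁽ʲ⁾ = R m_1 + ⋯ + R m_j`, the set
    -- `⋃_{i ≤ j} {u • m_i : u a monomial in k[G i]}` is a `k`-basis of `M⁽ʲ⁾`:
    ∀ j : ℕ, j ≤ p →
      (LinearIndependent k
          ((↑) : {x : M | ∃ i : Fin p, (i : ℕ) < j ∧
            ∃ u : Fin n →₀ ℕ, ↑u.support ⊆ G i ∧
              x = (monomial u (1 : k) : MvPolynomial (Fin n) k) • m i} → M) ∧
        Submodule.span k {x : M | ∃ i : Fin p, (i : ℕ) < j ∧
            ∃ u : Fin n →₀ ℕ, ↑u.support ⊆ G i ∧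
              x = (monomial u (1 : k) : MvPolynomial (Fin n) k) • m i} =
          Submodule.restrictScalars k (partialSpan k n M m j)) :=
  stmt_9_general M gr hgr_internal hgr_compat m G d hSD hdeg hsf hG hord
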